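/- arXiv:1502.01145 — 4 statements merged into one kernel-verified Lean document; each statement's English description precedes it below -/
import Mathlib

section
/- Let T > 0, let A : [0,T] → M_{2m}(ℝ) be a smooth map and let B₁, …, B_k ∈ M_{2m}(ℝ) be matrices such that 𝕁A(t) and each 𝕁B_i are symmetric for all t ∈ [0,T]. Let S : [0,T] → M_{2m}(ℝ) be the solution of Ṡ(t) = A(t)S(t), S(0) = I_{2m}, and define recursively B_i⁰(t) := B_i and B_i^j(t) := (d/dt)B_i^{j−1}(t) + B_i^{j−1}(t)A(t) − A(t)B_i^{j−1}(t). If there exists t̄ ∈ [0,T] such that Span{ B_i^j(t̄) : 1 ≤ i ≤ k, j ∈ ℕ } = { Y ∈ M_{2m}(ℝ) : 𝕁Y is symmetric }, then the linear map from L²([0,T]; ℝᵏ) to M_{2m}(ℝ) sending v to Σ_{i=1}^k ∫₀ᵀ v_i(t) S(t)⁻¹ B_i S(t) dt is surjective onto { Y ∈ M_{2m}(ℝ) : 𝕁Y is symmetric }. (This is the statement that the End-Point mapping of the bilinear control system Ẋ = A(t)X + Σ u_i B_i X on the symplectic group is a submersion at the zero control, i.e. the system is controllable at first order around ū ≡ 0.)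 -/
/-!
Write `gᵢ(t) = S(t)⁻¹ Bᵢ S(t)`. Each control of the form `vᵢ = f ∘ gᵢ`, with `f` a linear
functional, is continuous, and its image is the Gramian `Γ f = ∑ᵢ ∫ f(gᵢ) • gᵢ`; so it suffices
that `Y ∈ range Γ`. A functional `f` vanishing on `range Γ` has `0 = f (Γ f) = ∑ᵢ ∫ f(gᵢ)²`, so
`f ∘ gᵢ ≡ 0` on `[0,T]`. Since `d/dt (S⁻¹ X S) = S⁻¹ (X' + XA - AX) S`, differentiating
repeatedly gives `f(S⁻¹ Bᵢʲ S) ≡ 0`, hence, by the span hypothesis at `t̄`, `f(S(t̄)⁻¹ Z S(t̄)) = 0`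
for every `Z` with `𝕁Z` symmetric. As `𝕁A` is symmetric, `S(t)` is symplectic, so conjugation by
`S(t̄)` preserves that space and `f Y = 0`.
-/

open MeasureTheory

namespace Stmt0

/-- The space `M_{2m}(ℝ)` of real `2m × 2m` matrices, with rows/columns indexed by
`Fin m ⊕ Fin m` so that block decompositions are available. -/
abbrev Mat (m : ℕ) := Matrix (Fin m ⊕ Fin m) (Fin m ⊕ Fin m) ℝ

/-- The standard symplectic matrix `𝕁 = [[0, I_m], [−I_m, 0]]`. -/
noncomputable def Jm (m : ℕ) : Mat m := Matrix.fromBlocks 0 1 (-1) 0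

/-- The sequence of matrices `B⁰(t) := B`,
`B^{j+1}(t) := (d/dt)B^j(t) + B^j(t)A(t) − A(t)B^j(t)`, with derivatives taken
within the interval `[0,T]`. -/
noncomputable def Bseq {m : ℕ} (T : ℝ) (A : ℝ → Mat m) (B : Mat m) : ℕ → ℝ → Mat m
  | 0, _ => B
  | j + 1, t =>
      (Matrix.of fun a b => derivWithin (fun r => Bseq T A B j r a b) (Set.Icc 0 T) t)
        + (Bseq T A B j t * A t - A t * Bseq T A B j t)

open Matrix Set

theorem _root_.ContinuousOn.memLp_restrict_Ioc {F : Type*} [NormedAddCommGroup F] {a b : ℝ}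
    {v : ℝ → F} (hv : ContinuousOn v (Icc a b)) (p : ENNReal) :
    MemLp v p (volume.restrict (Ioc a b)) := by
  obtain ⟨C, hC⟩ := isCompact_Icc.exists_bound_of_continuousOn hv
  refine MemLp.of_bound ((hv.mono Ioc_subset_Icc_self).aestronglyMeasurable measurableSet_Ioc) C ?_
  exact (ae_restrict_mem measurableSet_Ioc).mono fun t ht => hC t (Ioc_subset_Icc_self ht)

section Gramian

variable {ι E : Type*} [NormedAddCommGroup E] [NormedSpace ℝ E]
  [FiniteDimensional ℝ E] {a b : ℝ} {g : ι → ℝ → E}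

theorem intervalIntegrable_dual_apply_smul (hg : ∀ i, ContinuousOn (g i) (uIcc a b))
    (f : Module.Dual ℝ E) (i : ι) :
    IntervalIntegrable (fun t => f (g i t) • g i t) volume a b :=
  ((f.continuous_of_finiteDimensional.comp_continuousOn (hg i)).smul (hg i)).intervalIntegrable

variable [Fintype ι]

noncomputable def gramian (hg : ∀ i, ContinuousOn (g i) (uIcc a b)) :
    Module.Dual ℝ E →ₗ[ℝ] E where
  toFun f := ∑ i, ∫ t in a..b, f (g i t) • g i t
  map_add' f h := by
    rw [← Finset.sum_add_distrib]
    refine Finset.sum_congr rfl fun i _ => ?_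
    simp only [LinearMap.add_apply, add_smul]
    exact intervalIntegral.integral_add (intervalIntegrable_dual_apply_smul hg f i)
      (intervalIntegrable_dual_apply_smul hg h i)
  map_smul' c f := by
    simp [Finset.smul_sum, mul_smul, intervalIntegral.integral_smul]

theorem apply_gramian (hg : ∀ i, ContinuousOn (g i) (uIcc a b)) (f h : Module.Dual ℝ E) :
    f (gramian hg h) = ∑ i, ∫ t in a..b, h (g i t) * f (g i t) := by
  simp only [gramian, LinearMap.coe_mk, AddHom.coe_mk, map_sum]
  refine Finset.sum_congr rfl fun i _ => ?_
  rw [← LinearMap.coe_toContinuousLinearMap' f,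
    ← ContinuousLinearMap.intervalIntegral_comp_comm _
      (intervalIntegrable_dual_apply_smul hg h i)]
  simp

theorem apply_eq_zero_of_apply_gramian_self_eq_zero (hab : a < b)
    (hg : ∀ i, ContinuousOn (g i) (uIcc a b)) {f : Module.Dual ℝ E}
    (hf : f (gramian hg f) = 0) (i : ι) : ∀ t ∈ Icc a b, f (g i t) = 0 := by
  rw [uIcc_of_le hab.le] at hg
  have hcont : ContinuousOn (fun t => f (g i t) * f (g i t)) (Icc a b) :=
    have := f.continuous_of_finiteDimensional.comp_continuousOn (hg i)
    this.mul this
  have hnonneg : ∀ i, 0 ≤ ∫ t in a..b, f (g i t) * f (g i t) := fun i =>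
    intervalIntegral.integral_nonneg hab.le fun t _ => mul_self_nonneg _
  have hzero : ∫ t in a..b, f (g i t) * f (g i t) = 0 := by
    rw [apply_gramian] at hf
    exact (Finset.sum_eq_zero_iff_of_nonneg fun i _ => hnonneg i).1 hf i (Finset.mem_univ i)
  intro t ht
  by_contra hft
  have hpos := intervalIntegral.integral_lt_integral_of_continuousOn_of_le_of_exists_lt hab
    continuousOn_const hcont (fun s _ => mul_self_nonneg (f (g i s)))
    ⟨t, ht, mul_self_pos.2 hft⟩
  simp [hzero] at hpos

theorem mem_range_gramian (hab : a < b) (hg : ∀ i, ContinuousOn (g i) (uIcc a b)) {Y : E}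
    (hY : ∀ f : Module.Dual ℝ E, (∀ i, ∀ t ∈ Icc a b, f (g i t) = 0) → f Y = 0) :
    Y ∈ LinearMap.range (gramian hg) := by
  by_contra hY'
  obtain ⟨f, hfY, hf⟩ := Submodule.exists_dual_map_eq_bot_of_notMem hY' inferInstance
  have hff : f (gramian hg f) = 0 := by
    simpa [hf] using Submodule.mem_map_of_mem (f := f) (LinearMap.mem_range_self (gramian hg) f)
  exact hfY (hY f (apply_eq_zero_of_apply_gramian_self_eq_zero hab hg hff))

end Gramian

theorem exists_memLp_sum_integral_mul_eq {ι n p : Type*} [Fintype ι] [Fintype n] [Fintype p]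
    {a b : ℝ} (hab : a < b) {g : ι → ℝ → Matrix n p ℝ}
    (hg : ∀ i x y, ContinuousOn (fun t => g i t x y) (Icc a b)) {Y : Matrix n p ℝ}
    (hY : ∀ φ : Matrix n p ℝ →ₗ[ℝ] ℝ, (∀ i, ∀ t ∈ Icc a b, φ (g i t) = 0) → φ Y = 0) :
    ∃ v : ℝ → ι → ℝ, MemLp v 2 (volume.restrict (Ioc a b)) ∧
      ∀ x y, ∑ i, ∫ t in a..b, v t i * g i t x y = Y x y := by
  set G : ι → ℝ → n → p → ℝ := fun i t => Matrix.of.symm (g i t)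
  have hG : ∀ i, ContinuousOn (G i) (uIcc a b) := fun i => by
    rw [uIcc_of_le hab.le]
    exact continuousOn_pi.2 fun x => continuousOn_pi.2 (hg i x)
  obtain ⟨f, hf⟩ := mem_range_gramian hab hG (Y := Matrix.of.symm Y) fun f hf =>
    hY (f ∘ₗ (Matrix.ofLinearEquiv ℝ).symm.toLinearMap) hf
  have hfG : ∀ i, ContinuousOn (fun t => f (G i t)) (Icc a b) := fun i =>
    f.continuous_of_finiteDimensional.comp_continuousOn (uIcc_of_le hab.le ▸ hG i)
  refine ⟨fun t i => f (G i t), (continuousOn_pi.2 hfG).memLp_restrict_Ioc 2, fun x y => ?_⟩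
  have hxy := congrFun (congrFun hf x) y
  simp only [gramian, LinearMap.coe_mk, AddHom.coe_mk, Finset.sum_apply] at hxy
  refine (Finset.sum_congr rfl fun i _ => ?_).trans hxy
  exact ((ContinuousLinearMap.proj (R := ℝ) (φ := fun _ : p => ℝ) y).comp
      (ContinuousLinearMap.proj (R := ℝ) (φ := fun _ : n => p → ℝ) x)).intervalIntegral_comp_comm
    (intervalIntegrable_dual_apply_smul hG f i)

section EntrywiseDeriv

variable {n p q : Type*} {s : Set ℝ} {t : ℝ}

def HasMatrixDerivWithinAt (M : ℝ → Matrix n p ℝ) (M' : Matrix n p ℝ) (s : Set ℝ) (t : ℝ) :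
    Prop :=
  ∀ x y, HasDerivWithinAt (fun r => M r x y) (M' x y) s t

theorem hasMatrixDerivWithinAt_iff [Fintype n] [Fintype p] {M : ℝ → Matrix n p ℝ}
    {M' : Matrix n p ℝ} :
    HasMatrixDerivWithinAt M M' s t ↔
      HasDerivWithinAt (fun r => of.symm (M r)) (of.symm M') s t := by
  rw [hasDerivWithinAt_pi]
  exact forall_congr' fun x => hasDerivWithinAt_pi.symm

theorem HasMatrixDerivWithinAt.mul [Fintype p] {M : ℝ → Matrix n p ℝ} {N : ℝ → Matrix p q ℝ}
    {M' : Matrix n p ℝ} {N' : Matrix p q ℝ} (hM : HasMatrixDerivWithinAt M M' s t)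
    (hN : HasMatrixDerivWithinAt N N' s t) :
    HasMatrixDerivWithinAt (fun r => M r * N r) (M' * N t + M t * N') s t := fun x y => by
  simp only [mul_apply, Matrix.add_apply, ← Finset.sum_add_distrib]
  exact HasDerivWithinAt.fun_sum fun c _ => (hM x c).fun_mul (hN c y)

theorem HasMatrixDerivWithinAt.transpose {M : ℝ → Matrix n p ℝ} {M' : Matrix n p ℝ}
    (hM : HasMatrixDerivWithinAt M M' s t) :
    HasMatrixDerivWithinAt (fun r => (M r)ᵀ) M'ᵀ s t := fun x y => hM y x

theorem HasMatrixDerivWithinAt.neg {M : ℝ → Matrix n p ℝ} {M' : Matrix n p ℝ}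
    (hM : HasMatrixDerivWithinAt M M' s t) :
    HasMatrixDerivWithinAt (fun r => -M r) (-M') s t := fun x y => (hM x y).neg

theorem hasMatrixDerivWithinAt_const (C : Matrix n p ℝ) :
    HasMatrixDerivWithinAt (fun _ => C) 0 s t := fun x y => hasDerivWithinAt_const t s (C x y)

theorem HasMatrixDerivWithinAt.congr_of_mem {M N : ℝ → Matrix n p ℝ} {M' : Matrix n p ℝ}
    (hM : HasMatrixDerivWithinAt M M' s t) (hNM : EqOn N M s) (ht : t ∈ s) :
    HasMatrixDerivWithinAt N M' s t := fun x y =>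
  (hM x y).congr_of_mem (fun r hr => by rw [hNM hr]) ht

theorem HasMatrixDerivWithinAt.linearMap_apply [Fintype n] [Fintype p] {M : ℝ → Matrix n p ℝ}
    {M' : Matrix n p ℝ} (hM : HasMatrixDerivWithinAt M M' s t) (φ : Matrix n p ℝ →ₗ[ℝ] ℝ) :
    HasDerivWithinAt (fun r => φ (M r)) (φ M') s t :=
  (LinearMap.toContinuousLinearMap (φ ∘ₗ (ofLinearEquiv ℝ).toLinearMap)).hasFDerivAt
    |>.comp_hasDerivWithinAt t (hasMatrixDerivWithinAt_iff.1 hM)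

end EntrywiseDeriv

section Symplectic

variable {m : ℕ}

theorem Jm_eq_neg_J (m : ℕ) : Jm m = -J (Fin m) ℝ := by
  simp [Jm, J, fromBlocks_neg]

theorem Jm_transpose (m : ℕ) : (Jm m)ᵀ = -Jm m := by
  rw [Jm_eq_neg_J, transpose_neg, J_transpose]

theorem mem_symplecticGroup_iff_Jm {P : Mat m} :
    P ∈ symplecticGroup (Fin m) ℝ ↔ Pᵀ * Jm m * P = Jm m := by
  rw [SymplecticGroup.mem_iff', Jm_eq_neg_J, mul_neg, neg_mul, neg_inj]

theorem inv_eq_of_mem_symplecticGroup {P : Mat m} (hP : P ∈ symplecticGroup (Fin m) ℝ) :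
    P⁻¹ = -(Jm m * Pᵀ * Jm m) := by
  rw [SymplecticGroup.inv_eq_symplectic_inv P hP, Jm_eq_neg_J]
  simp

theorem transpose_mul_Jm_of_isSymm {Y : Mat m} (hY : (Jm m * Y).IsSymm) :
    Yᵀ * Jm m = -(Jm m * Y) := by
  rw [← hY.eq, transpose_mul, Jm_transpose, mul_neg, neg_neg]

theorem isSymm_Jm_mul_conj {P Y : Mat m} (hP : P ∈ symplecticGroup (Fin m) ℝ)
    (hY : (Jm m * Y).IsSymm) : (Jm m * (P * Y * P⁻¹)).IsSymm := by
  have hPinv : P * P⁻¹ = 1 := mul_nonsing_inv P (SymplecticGroup.symplectic_det hP)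
  have hJP : Jm m * P = (P⁻¹)ᵀ * Jm m := by
    calc Jm m * P = (P * P⁻¹)ᵀ * Jm m * P := by rw [hPinv, transpose_one, one_mul]
      _ = (P⁻¹)ᵀ * (Pᵀ * Jm m * P) := by rw [transpose_mul]; noncomm_ring
      _ = (P⁻¹)ᵀ * Jm m := by rw [mem_symplecticGroup_iff_Jm.1 hP]
  have hconj : Jm m * (P * Y * P⁻¹) = (P⁻¹)ᵀ * (Jm m * Y) * P⁻¹ := by
    rw [← Matrix.mul_assoc, ← Matrix.mul_assoc, hJP]; noncomm_ring
  rw [hconj, IsSymm, transpose_mul, transpose_mul, transpose_transpose, hY.eq]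
  simp only [Matrix.mul_assoc]

end Symplectic

section Flow

variable {m : ℕ} {T : ℝ} {A S : ℝ → Mat m}

theorem mem_symplecticGroup_of_hasMatrixDerivWithinAt (hT : 0 < T)
    (hJA : ∀ t ∈ Icc (0 : ℝ) T, (Jm m * A t).IsSymm) (hS0 : S 0 ∈ symplecticGroup (Fin m) ℝ)
    (hS : ∀ t ∈ Icc (0 : ℝ) T, HasMatrixDerivWithinAt S (A t * S t) (Icc 0 T) t) :
    ∀ t ∈ Icc (0 : ℝ) T, S t ∈ symplecticGroup (Fin m) ℝ := by
  have hD : ∀ t ∈ Icc (0 : ℝ) T,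
      HasMatrixDerivWithinAt (fun r => (S r)ᵀ * Jm m * S r) 0 (Icc 0 T) t := by
    intro t ht
    convert ((hS t ht).transpose.mul (hasMatrixDerivWithinAt_const (Jm m))).mul (hS t ht) using 1
    calc (0 : Mat m) = (S t)ᵀ * ((A t)ᵀ * Jm m + Jm m * A t) * S t := by
          rw [transpose_mul_Jm_of_isSymm (hJA t ht), neg_add_cancel, Matrix.mul_zero,
            Matrix.zero_mul]
      _ = _ := by rw [transpose_mul]; noncomm_ring
  intro t ht
  rw [mem_symplecticGroup_iff_Jm] at hS0 ⊢
  ext x y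
  have hconst := constant_of_derivWithin_zero (f := fun r => ((S r)ᵀ * Jm m * S r) x y)
    (fun r hr => (hD r hr x y).differentiableWithinAt)
    (fun r hr => (hD r (Ico_subset_Icc_self hr) x y).derivWithin
      (uniqueDiffOn_Icc hT r (Ico_subset_Icc_self hr))) t ht
  rw [hconst, hS0]

theorem hasMatrixDerivWithinAt_inv (hJA : ∀ t ∈ Icc (0 : ℝ) T, (Jm m * A t).IsSymm)
    (hsymp : ∀ t ∈ Icc (0 : ℝ) T, S t ∈ symplecticGroup (Fin m) ℝ)
    (hS : ∀ t ∈ Icc (0 : ℝ) T, HasMatrixDerivWithinAt S (A t * S t) (Icc 0 T) t) :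
    ∀ t ∈ Icc (0 : ℝ) T,
      HasMatrixDerivWithinAt (fun r => (S r)⁻¹) (-((S t)⁻¹ * A t)) (Icc 0 T) t := by
  intro t ht
  have hD := (((hasMatrixDerivWithinAt_const (Jm m)).mul (hS t ht).transpose).mul
    (hasMatrixDerivWithinAt_const (Jm m))).neg
  convert hD.congr_of_mem (fun r hr => inv_eq_of_mem_symplecticGroup (hsymp r hr)) ht using 1
  rw [inv_eq_of_mem_symplecticGroup (hsymp t ht), transpose_mul]
  calc -(-(Jm m * (S t)ᵀ * Jm m) * A t) = -(Jm m * (S t)ᵀ * -(Jm m * A t)) := by noncomm_ring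
    _ = -(Jm m * (S t)ᵀ * ((A t)ᵀ * Jm m)) := by rw [transpose_mul_Jm_of_isSymm (hJA t ht)]
    _ = _ := by noncomm_ring

theorem hasMatrixDerivWithinAt_conj {s : Set ℝ} {t : ℝ} {X : ℝ → Mat m} {X' : Mat m}
    (hSinv : HasMatrixDerivWithinAt (fun r => (S r)⁻¹) (-((S t)⁻¹ * A t)) s t)
    (hS : HasMatrixDerivWithinAt S (A t * S t) s t) (hX : HasMatrixDerivWithinAt X X' s t) :
    HasMatrixDerivWithinAt (fun r => (S r)⁻¹ * X r * S r)
      ((S t)⁻¹ * (X' + (X t * A t - A t * X t)) * S t) s t := by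
  convert (hSinv.mul hX).mul hS using 1
  noncomm_ring

theorem contDiffOn_Bseq (hT : 0 < T)
    (hA : ∀ x y, ContDiffOn ℝ (⊤ : ℕ∞) (fun t => A t x y) (Icc 0 T)) (B : Mat m) (j : ℕ) :
    ∀ x y, ContDiffOn ℝ (⊤ : ℕ∞) (fun t => Bseq T A B j t x y) (Icc 0 T) := by
  induction j with
  | zero => exact fun x y => contDiffOn_const
  | succ j ih =>
    intro x y
    simp only [Bseq, Matrix.add_apply, Matrix.sub_apply, of_apply, mul_apply]
    exact ((ih x y).derivWithin (uniqueDiffOn_Icc hT) (by simp)).add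
      ((ContDiffOn.sum fun c _ => (ih x c).mul (hA c y)).sub
        (ContDiffOn.sum fun c _ => (hA x c).mul (ih c y)))

theorem hasMatrixDerivWithinAt_Bseq (hT : 0 < T)
    (hA : ∀ x y, ContDiffOn ℝ (⊤ : ℕ∞) (fun t => A t x y) (Icc 0 T)) (B : Mat m) (j : ℕ)
    {t : ℝ} (ht : t ∈ Icc (0 : ℝ) T) :
    HasMatrixDerivWithinAt (Bseq T A B j)
      (of fun x y => derivWithin (fun r => Bseq T A B j r x y) (Icc 0 T) t) (Icc 0 T) t :=
  fun x y => ((contDiffOn_Bseq hT hA B j x y).differentiableOn (by simp) t ht).hasDerivWithinAt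

theorem apply_conj_Bseq_eq_zero (hT : 0 < T)
    (hA : ∀ x y, ContDiffOn ℝ (⊤ : ℕ∞) (fun t => A t x y) (Icc 0 T))
    (hSinv : ∀ t ∈ Icc (0 : ℝ) T,
      HasMatrixDerivWithinAt (fun r => (S r)⁻¹) (-((S t)⁻¹ * A t)) (Icc 0 T) t)
    (hS : ∀ t ∈ Icc (0 : ℝ) T, HasMatrixDerivWithinAt S (A t * S t) (Icc 0 T) t)
    (φ : Mat m →ₗ[ℝ] ℝ) {B : Mat m} (hB : ∀ t ∈ Icc (0 : ℝ) T, φ ((S t)⁻¹ * B * S t) = 0)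
    (j : ℕ) : ∀ t ∈ Icc (0 : ℝ) T, φ ((S t)⁻¹ * Bseq T A B j t * S t) = 0 := by
  induction j with
  | zero => exact hB
  | succ j ih =>
    intro t ht
    have hderiv := (hasMatrixDerivWithinAt_conj (hSinv t ht) (hS t ht)
      (hasMatrixDerivWithinAt_Bseq hT hA B j ht)).linearMap_apply φ
    exact (uniqueDiffOn_Icc hT t ht).eq_deriv _ hderiv
      ((hasDerivWithinAt_const t _ 0).congr_of_mem ih ht)

end Flow

theorem apply_eq_zero_of_span_eq {m : ℕ} {G : Set (Mat m)}
    (hspan : (Submodule.span ℝ G : Set (Mat m)) = {Y : Mat m | (Jm m * Y).IsSymm})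
    {P : Mat m} (hP : P ∈ symplecticGroup (Fin m) ℝ) {φ : Mat m →ₗ[ℝ] ℝ}
    (hφ : ∀ X ∈ G, φ (P⁻¹ * X * P) = 0) {Y : Mat m} (hY : (Jm m * Y).IsSymm) : φ Y = 0 := by
  set ψ := φ ∘ₗ LinearMap.mulRight ℝ P ∘ₗ LinearMap.mulLeft ℝ P⁻¹
  have hle : Submodule.span ℝ G ≤ LinearMap.ker ψ :=
    Submodule.span_le.2 fun X hX => hφ X hX
  have hmem : P * Y * P⁻¹ ∈ Submodule.span ℝ G := by
    rw [← SetLike.mem_coe, hspan]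
    exact isSymm_Jm_mul_conj hP hY
  have hdet := SymplecticGroup.symplectic_det hP
  simpa [ψ, Matrix.mul_assoc, nonsing_inv_mul _ hdet, nonsing_inv_mul_cancel_left _ _ hdet]
    using hle hmem

theorem first_order_controllability_general {m k : ℕ} (T : ℝ) (hT : 0 < T)
    (A : ℝ → Mat m) (B : Fin k → Mat m)
    (hA : ∀ a b, ContDiffOn ℝ (⊤ : ℕ∞) (fun t => A t a b) (Set.Icc 0 T))
    (hJA : ∀ t ∈ Set.Icc (0 : ℝ) T, (Jm m * A t).IsSymm)
    (S : ℝ → Mat m) (hS0 : S 0 = 1)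
    (hS : ∀ t ∈ Set.Icc (0 : ℝ) T, ∀ a b,
      HasDerivWithinAt (fun r => S r a b) ((A t * S t) a b) (Set.Icc 0 T) t)
    (tbar : ℝ) (htbar : tbar ∈ Set.Icc (0 : ℝ) T)
    (hspan :
      (Submodule.span ℝ {Y : Mat m | ∃ (i : Fin k) (j : ℕ), Y = Bseq T A (B i) j tbar}
        : Set (Mat m)) = {Y : Mat m | (Jm m * Y).IsSymm}) :
    ∀ Y : Mat m, (Jm m * Y).IsSymm →
      ∃ v : ℝ → Fin k → ℝ,
        MemLp v 2 (volume.restrict (Set.Ioc 0 T)) ∧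
        ∀ a b, (∑ i, ∫ t in (0 : ℝ)..T, v t i * ((S t)⁻¹ * B i * S t) a b) = Y a b := by
  intro Y hY
  have hsymp := mem_symplecticGroup_of_hasMatrixDerivWithinAt hT hJA (hS0 ▸ one_mem _) hS
  have hSinv := hasMatrixDerivWithinAt_inv hJA hsymp hS
  refine exists_memLp_sum_integral_mul_eq hT (fun i x y t ht => (hasMatrixDerivWithinAt_conj
    (hSinv t ht) (hS t ht) (hasMatrixDerivWithinAt_const (B i)) x y).continuousWithinAt)
    fun φ hφ => ?_
  refine apply_eq_zero_of_span_eq hspan (hsymp tbar htbar) ?_ hY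
  rintro X ⟨i, j, rfl⟩
  exact apply_conj_Bseq_eq_zero hT hA hSinv hS φ (hφ i) j tbar htbar

/-- **First-order controllability** (Proposition 2.1 / `LIEPROP1`):
if `Span{ B_i^j(t̄) : i, j } = T_I Sp(m) = { Y : 𝕁Y symmetric }` for some `t̄ ∈ [0,T]`,
then the differential at `u ≡ 0` of the End-Point mapping,
`v ↦ S(T)·Σ_i ∫₀ᵀ v_i(t) S(t)⁻¹ B_i S(t) dt`, is onto `T_I Sp(m)`; equivalently the map
`v ↦ Σ_i ∫₀ᵀ v_i(t) S(t)⁻¹ B_i S(t) dt` is surjective onto `{ Y : 𝕁Y symmetric }`. -/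
theorem first_order_controllability {m k : ℕ} (hm : 1 ≤ m) (T : ℝ) (hT : 0 < T)
    (A : ℝ → Mat m) (B : Fin k → Mat m)
    (hA : ∀ a b, ContDiffOn ℝ (⊤ : ℕ∞) (fun t => A t a b) (Set.Icc 0 T))
    (hJA : ∀ t ∈ Set.Icc (0 : ℝ) T, (Jm m * A t).IsSymm)
    (hJB : ∀ i, (Jm m * B i).IsSymm)
    (S : ℝ → Mat m) (hS0 : S 0 = 1)
    (hS : ∀ t ∈ Set.Icc (0 : ℝ) T, ∀ a b,
      HasDerivWithinAt (fun r => S r a b) ((A t * S t) a b) (Set.Icc 0 T) t)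
    (tbar : ℝ) (htbar : tbar ∈ Set.Icc (0 : ℝ) T)
    (hspan :
      (Submodule.span ℝ {Y : Mat m | ∃ (i : Fin k) (j : ℕ), Y = Bseq T A (B i) j tbar}
        : Set (Mat m)) = {Y : Mat m | (Jm m * Y).IsSymm}) :
    ∀ Y : Mat m, (Jm m * Y).IsSymm →
      ∃ v : ℝ → Fin k → ℝ,
        MemLp v 2 (volume.restrict (Set.Ioc 0 T)) ∧
        ∀ a b, (∑ i, ∫ t in (0 : ℝ)..T, v t i * ((S t)⁻¹ * B i * S t) a b) = Y a b :=
  first_order_controllability_general T hT A B hA hJA S hS0 hS tbar htbar hspan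

end Stmt0
end

section
/- Let n ≥ 1, let S ∈ M_{2n}(ℝ) be a symplectic matrix and let L ⊆ ℝ^{2n} be a Lagrangian subspace with S(L) = L. Then there exist a matrix U ∈ M_{2n}(ℝ) that is both orthogonal (UᵀU = I) and symplectic (Uᵀ𝕁U = 𝕁), an invertible n×n matrix A, and an n×n matrix B with Bᵀ(Aᵀ)⁻¹ symmetric, such that U maps L onto the coordinate subspace ℝⁿ × {0} ⊆ ℝ^{2n} and U S U⁻¹ = [[A, B], [0, (Aᵀ)⁻¹]]. In these coordinates the block A represents the restriction of S to L. -/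
/-!
Pick an orthonormal basis `v₁, …, vₙ` of `L` as the rows of `V`. Because `L` is Lagrangian, the
rows of `V * 𝕁`, i.e. the vectors `-𝕁vᵢ`, are orthogonal to `L`, so the rows of `V` and `V * 𝕁`
together form a basis of `ℝ²ⁿ` that is both orthonormal and symplectic. The matrix `U` with these
rows is orthogonal and symplectic and maps `L` onto `ℝⁿ × {0}`. Hence `U S U⁻¹ = U S Uᵀ` is
symplectic and preserves `ℝⁿ × {0}`, so it is block upper triangular, and for such matrices the
symplectic relations read `Aᵀ D = 1` and `Bᵀ D = Dᵀ B`.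
-/

open Matrix

namespace Stmt13

/-- The standard symplectic matrix `𝕁 = [[0, I_n], [−I_n, 0]]`. -/
noncomputable def Jn (n : ℕ) : Matrix (Fin n ⊕ Fin n) (Fin n ⊕ Fin n) ℝ :=
  Matrix.fromBlocks 0 1 (-1) 0

theorem toBlocks₂₁_eq_zero_of_mulVec_inr_eq_zero {R l m : Type*} [Semiring R] [Fintype l]
    [Fintype m] [DecidableEq l] [DecidableEq m] {T : Matrix (l ⊕ m) (l ⊕ m) R}
    (hT : ∀ x : l ⊕ m → R, (∀ i, x (Sum.inr i) = 0) → ∀ i, (T *ᵥ x) (Sum.inr i) = 0) :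
    T.toBlocks₂₁ = 0 := by
  ext i j
  simpa [toBlocks₂₁] using hT (Pi.single (Sum.inl j) 1) (by simp) i

theorem exists_eq_fromBlocks_of_toBlocks₂₁_eq_zero {R l : Type*} [CommRing R] [Fintype l]
    [DecidableEq l] {T : Matrix (l ⊕ l) (l ⊕ l) R} (hT : T ∈ symplecticGroup l R)
    (h₂₁ : T.toBlocks₂₁ = 0) :
    ∃ A B : Matrix l l R, IsUnit A ∧ (Bᵀ * (Aᵀ)⁻¹).IsSymm ∧ T = fromBlocks A B 0 (Aᵀ)⁻¹ := by
  rw [← fromBlocks_toBlocks T, h₂₁, SymplecticGroup.fromBlocks_mem_iff] at hT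
  obtain ⟨-, hBD, hAD⟩ := hT
  rw [transpose_zero, Matrix.zero_mul, sub_zero] at hAD
  have hD : (T.toBlocks₁₁ᵀ)⁻¹ = T.toBlocks₂₂ := inv_eq_right_inv hAD
  refine ⟨T.toBlocks₁₁, T.toBlocks₁₂, ?_, ?_, ?_⟩
  · exact (isUnit_transpose _).mp (IsUnit.of_mul_eq_one _ hAD)
  · rw [IsSymm, hD, transpose_mul, transpose_transpose, hBD]
  · rw [hD, ← h₂₁, fromBlocks_toBlocks]

theorem Jn_eq_neg_J (n : ℕ) : Jn n = -J (Fin n) ℝ := by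
  simp [Jn, J, fromBlocks_neg]

theorem Jn_transpose (n : ℕ) : (Jn n)ᵀ = -Jn n := by
  rw [Jn_eq_neg_J, transpose_neg, J_transpose]

theorem Jn_mul_Jn (n : ℕ) : Jn n * Jn n = -1 := by
  rw [Jn_eq_neg_J, neg_mul_neg, J_squared]

theorem Jn_mul_Jn_mul {m : Type*} [Fintype m] (n : ℕ) (M : Matrix (Fin n ⊕ Fin n) m ℝ) :
    Jn n * (Jn n * M) = -M := by
  rw [← Matrix.mul_assoc, Jn_mul_Jn, Matrix.neg_mul, Matrix.one_mul]

theorem mem_symplecticGroup_iff_Jn {n : ℕ} {S : Matrix (Fin n ⊕ Fin n) (Fin n ⊕ Fin n) ℝ} :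
    S ∈ symplecticGroup (Fin n) ℝ ↔ S * Jn n * Sᵀ = Jn n := by
  rw [SymplecticGroup.mem_iff, Jn_eq_neg_J, Matrix.mul_neg, Matrix.neg_mul, neg_inj]

theorem mem_symplecticGroup_iff_Jn' {n : ℕ} {S : Matrix (Fin n ⊕ Fin n) (Fin n ⊕ Fin n) ℝ} :
    S ∈ symplecticGroup (Fin n) ℝ ↔ Sᵀ * Jn n * S = Jn n := by
  rw [SymplecticGroup.mem_iff', Jn_eq_neg_J, Matrix.mul_neg, Matrix.neg_mul, neg_inj]

theorem exists_orthonormal_rows {ι : Type*} [Fintype ι] {k : ℕ} (L : Submodule ℝ (ι → ℝ))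
    (hk : Module.finrank ℝ L = k) :
    ∃ V : Matrix (Fin k) ι ℝ, (∀ i, V i ∈ L) ∧ V * Vᵀ = 1 := by
  let e : EuclideanSpace ℝ ι ≃ₗ[ℝ] (ι → ℝ) := (EuclideanSpace.equiv ι ℝ).toLinearEquiv
  let L' : Submodule ℝ (EuclideanSpace ℝ ι) := L.comap (e : EuclideanSpace ℝ ι →ₗ[ℝ] ι → ℝ)
  have hk' : Module.finrank ℝ L' = k := by
    rw [← hk, ← LinearEquiv.finrank_map_eq e L', Submodule.map_comap_eq_of_surjective e.surjective]
  let b := (stdOrthonormalBasis ℝ L').reindex (finCongr hk')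
  refine ⟨of fun i => WithLp.ofLp (b i : EuclideanSpace ℝ ι), fun i => (b i).2, ?_⟩
  ext i j
  have hb := orthonormal_iff_ite.mp b.orthonormal j i
  simpa [EuclideanSpace.inner_eq_star_dotProduct, mul_apply, dotProduct, one_apply, eq_comm]
    using hb

theorem mul_Jn_mul_transpose_eq_zero {n k : ℕ} {V : Matrix (Fin k) (Fin n ⊕ Fin n) ℝ}
    {L : Submodule ℝ (Fin n ⊕ Fin n → ℝ)} (hVL : ∀ i, V i ∈ L)
    (hLag : ∀ u ∈ L, ∀ v ∈ L, u ⬝ᵥ Jn n *ᵥ v = 0) : V * Jn n * Vᵀ = 0 := by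
  ext i j
  rw [mul_apply', mul_apply_eq_vecMul, ← dotProduct_mulVec]
  exact hLag _ (hVL i) _ (hVL j)

section LagrangianFrame

variable {n : ℕ} (V : Matrix (Fin n) (Fin n ⊕ Fin n) ℝ)

noncomputable def lagrangianFrame : Matrix (Fin n ⊕ Fin n) (Fin n ⊕ Fin n) ℝ :=
  fromRows V (V * Jn n)

variable {V}

theorem lagrangianFrame_mul_transpose (hV : V * Vᵀ = 1) (hiso : V * Jn n * Vᵀ = 0) :
    lagrangianFrame V * (lagrangianFrame V)ᵀ = 1 := by
  rw [Matrix.mul_assoc] at hiso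
  simp only [lagrangianFrame, transpose_fromRows, fromRows_mul_fromCols, transpose_mul,
    Jn_transpose, Matrix.mul_neg, Matrix.neg_mul, Matrix.mul_assoc, Jn_mul_Jn_mul, neg_neg, hV,
    hiso, neg_zero, fromBlocks_one]

theorem lagrangianFrame_mem_symplecticGroup (hV : V * Vᵀ = 1) (hiso : V * Jn n * Vᵀ = 0) :
    lagrangianFrame V ∈ symplecticGroup (Fin n) ℝ := by
  rw [Matrix.mul_assoc] at hiso
  rw [mem_symplecticGroup_iff_Jn, lagrangianFrame, transpose_fromRows, fromRows_mul,
    fromRows_mul_fromCols]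
  simp only [transpose_mul, Jn_transpose, Matrix.mul_neg, Matrix.neg_mul, Matrix.mul_assoc,
    Jn_mul_Jn_mul, neg_neg, hV, hiso, neg_zero]
  rfl

theorem mem_map_lagrangianFrame_iff {L : Submodule ℝ (Fin n ⊕ Fin n → ℝ)} (hVL : ∀ i, V i ∈ L)
    (hLag : ∀ u ∈ L, ∀ v ∈ L, u ⬝ᵥ Jn n *ᵥ v = 0) (hV : V * Vᵀ = 1) (x : Fin n ⊕ Fin n → ℝ) :
    x ∈ L.map (lagrangianFrame V).mulVecLin ↔ ∀ i, x (Sum.inr i) = 0 := by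
  have hL : ∀ y ∈ L, ∀ i, (lagrangianFrame V *ᵥ y) (Sum.inr i) = 0 := fun y hy i => by
    rw [lagrangianFrame, fromRows_mulVec, Sum.elim_inr, ← mulVec_mulVec]
    exact hLag _ (hVL i) _ hy
  refine ⟨fun ⟨y, hy, hxy⟩ => hxy ▸ hL y hy, fun hx => ?_⟩
  have hy : (x ∘ Sum.inl) ᵥ* V ∈ L := by
    rw [vecMul_eq_sum]
    exact Submodule.sum_mem _ fun i _ => Submodule.smul_mem _ _ (hVL i)
  refine ⟨_, hy, funext fun a => ?_⟩
  rcases a with i | i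
  · simp [lagrangianFrame, fromRows_mulVec, ← mulVec_transpose, mulVec_mulVec, hV]
  · rw [mulVecLin_apply, hL _ hy, hx]

end LagrangianFrame

theorem symplectic_lagrangian_normal_form_general {n : ℕ}
    (S : Matrix (Fin n ⊕ Fin n) (Fin n ⊕ Fin n) ℝ)
    (hS : Sᵀ * Jn n * S = Jn n)
    (L : Submodule ℝ ((Fin n ⊕ Fin n) → ℝ))
    (hdim : Module.finrank ℝ L = n)
    (hLag : ∀ u ∈ L, ∀ v ∈ L, u ⬝ᵥ (Jn n).mulVec v = 0)
    (hSL : Submodule.map (Matrix.mulVecLin S) L = L) :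
    ∃ (U : Matrix (Fin n ⊕ Fin n) (Fin n ⊕ Fin n) ℝ)
      (A B : Matrix (Fin n) (Fin n) ℝ),
      Uᵀ * U = 1 ∧
      Uᵀ * Jn n * U = Jn n ∧
      IsUnit A ∧
      (Bᵀ * (Aᵀ)⁻¹).IsSymm ∧
      (∀ x : (Fin n ⊕ Fin n) → ℝ,
        x ∈ Submodule.map (Matrix.mulVecLin U) L ↔ ∀ i : Fin n, x (Sum.inr i) = 0) ∧
      U * S * U⁻¹ = Matrix.fromBlocks A B 0 (Aᵀ)⁻¹ := by
  obtain ⟨V, hVL, hV⟩ := exists_orthonormal_rows L hdim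
  have hiso := mul_Jn_mul_transpose_eq_zero hVL hLag
  have hUUt := lagrangianFrame_mul_transpose hV hiso
  have hU := lagrangianFrame_mem_symplecticGroup hV hiso
  have hUL := mem_map_lagrangianFrame_iff hVL hLag hV
  set U := lagrangianFrame V
  have hUtU : Uᵀ * U = 1 := mul_eq_one_comm.mp hUUt
  have hT : U * S * Uᵀ ∈ symplecticGroup (Fin n) ℝ :=
    mul_mem (mul_mem hU (mem_symplecticGroup_iff_Jn'.mpr hS)) (SymplecticGroup.transpose_mem hU)
  have hT₂₁ : (U * S * Uᵀ).toBlocks₂₁ = 0 := by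
    refine toBlocks₂₁_eq_zero_of_mulVec_inr_eq_zero fun x hx => ?_
    obtain ⟨y, hy, rfl⟩ := (hUL x).mpr hx
    refine (hUL _).mp ⟨S *ᵥ y, hSL ▸ Submodule.mem_map_of_mem hy, ?_⟩
    simp only [mulVecLin_apply, mulVec_mulVec, Matrix.mul_assoc, hUtU, Matrix.mul_one]
  obtain ⟨A, B, hA, hB, hT⟩ := exists_eq_fromBlocks_of_toBlocks₂₁_eq_zero hT hT₂₁
  refine ⟨U, A, B, hUtU, mem_symplecticGroup_iff_Jn'.mp hU, hA, hB, hUL, ?_⟩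
  rwa [inv_eq_right_inv hUUt]

/-- **Lemma `sympdec1`**: if `S` is symplectic and `L ⊆ ℝ^{2n}` is an `S`-invariant
Lagrangian subspace (for the form `ω(u,v) = uᵀ𝕁v`), then there is a matrix `U`, both
orthogonal and symplectic, carrying `L` onto `ℝⁿ × {0}` and such that
`U S U⁻¹ = [[A, B], [0, (Aᵀ)⁻¹]]` with `A` invertible and `Bᵀ(Aᵀ)⁻¹` symmetric (in these
coordinates `A` represents the restriction of `S` to `L`). -/
theorem symplectic_lagrangian_normal_form {n : ℕ} (hn : 1 ≤ n)
    (S : Matrix (Fin n ⊕ Fin n) (Fin n ⊕ Fin n) ℝ)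
    (hS : Sᵀ * Jn n * S = Jn n)
    (L : Submodule ℝ ((Fin n ⊕ Fin n) → ℝ))
    (hdim : Module.finrank ℝ L = n)
    (hLag : ∀ u ∈ L, ∀ v ∈ L, u ⬝ᵥ (Jn n).mulVec v = 0)
    (hSL : Submodule.map (Matrix.mulVecLin S) L = L) :
    ∃ (U : Matrix (Fin n ⊕ Fin n) (Fin n ⊕ Fin n) ℝ)
      (A B : Matrix (Fin n) (Fin n) ℝ),
      Uᵀ * U = 1 ∧
      Uᵀ * Jn n * U = Jn n ∧
      IsUnit A ∧
      (Bᵀ * (Aᵀ)⁻¹).IsSymm ∧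
      (∀ x : (Fin n ⊕ Fin n) → ℝ,
        x ∈ Submodule.map (Matrix.mulVecLin U) L ↔ ∀ i : Fin n, x (Sum.inr i) = 0) ∧
      U * S * U⁻¹ = Matrix.fromBlocks A B 0 (Aᵀ)⁻¹ :=
  symplectic_lagrangian_normal_form_general S hS L hdim hLag hSL

end Stmt13
end

section
/- Let m ≥ 1, let R be a symmetric m×m real matrix and set 𝔸 := [[0, I_m], [−R, 0]] ∈ M_{2m}(ℝ). For 1 ≤ i ≤ j ≤ m let E(ij) be the symmetric m×m matrix with entries (E(ij))_{kl} = δ_{ik}δ_{jl} + δ_{il}δ_{jk} and ℰ(ij) := [[0, 0], [E(ij), 0]]. Then the real span of the set of matrices { ℰ(ij) : i ≤ j } ∪ { [ℰ(ij), 𝔸] : i ≤ j } ∪ { [[ℰ(ij), 𝔸], 𝔸] : i ≤ j } ∪ { [[ℰ(ij), 𝔸], [ℰ(kl), 𝔸]] : i ≤ j, k ≤ l } equals { Y ∈ M_{2m}(ℝ) : 𝕁Y is symmetric }, the tangent space at the identity of the symplectic group Sp(m); in particular this span has dimension m(2m+1). -/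
/-
Writing `Y = [[A, B], [C, D]]`, the condition "`𝕁Y` symmetric" says exactly that `B` and `C`
are symmetric and `D = -Aᵀ`; this is Mathlib's symplectic Lie algebra `sp`. The generators lie
in `sp` (`ℰ(ij)` and `𝔸` do, and `sp` is closed under brackets), so their span is contained in
it. Conversely, with `E = E(ij)`,
  `[ℰ(ij), 𝔸] = [[-E, 0], [0, E]]`,
  `[[ℰ(ij), 𝔸], 𝔸] = [[0, -2E], [-(ER + RE), 0]]`,
  `[[ℰ(ij), 𝔸], [ℰ(kl), 𝔸]] = [[K, 0], [0, K]]` with `K = [E(ij), E(kl)]`,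
and the `E(ij)` span the symmetric matrices while the `[E(ii), E(ij)] = 2(e_ij - e_ji)` span the
skew ones. Hence the span contains every `[[0, 0], [C, 0]]`, `[[0, B], [0, 0]]`,
`[[S, 0], [0, -S]]` (`B, C, S` symmetric) and `[[K, 0], [0, K]]` (`K` skew), and these add up to
all of `sp`. Finally `Y ↦ 𝕁Y` maps `sp` onto the symmetric `2m × 2m` matrices, of dimension
`2m(2m + 1)/2 = m(2m + 1)`.
-/

open Matrix

namespace Stmt16

/-- The symmetric matrix `E(ij)` with entries `(E(ij))_{kl} = δ_{ik}δ_{jl} + δ_{il}δ_{jk}`. -/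
def Eij {m : ℕ} (i j : Fin m) : Matrix (Fin m) (Fin m) ℝ :=
  Matrix.of fun k l =>
    ((if i = k ∧ j = l then 1 else 0) : ℝ) + (if i = l ∧ j = k then 1 else 0)

/-- `ℰ(ij) = [[0,0],[E(ij),0]]`. -/
def calE {m : ℕ} (i j : Fin m) : Matrix (Fin m ⊕ Fin m) (Fin m ⊕ Fin m) ℝ :=
  Matrix.fromBlocks 0 0 (Eij i j) 0

/-- `𝔸 = [[0, I_m],[−R, 0]]`. -/
noncomputable def Amat {m : ℕ} (R : Matrix (Fin m) (Fin m) ℝ) :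
    Matrix (Fin m ⊕ Fin m) (Fin m ⊕ Fin m) ℝ :=
  Matrix.fromBlocks 0 1 (-R) 0

/-- The matrix bracket `[B, B'] = BB' − B'B`. -/
def br {N : Type*} [Fintype N] (X Y : Matrix N N ℝ) : Matrix N N ℝ := X * Y - Y * X

/-- The standard symplectic matrix `𝕁 = [[0, I_m], [−I_m, 0]]`. -/
noncomputable def Jm (m : ℕ) : Matrix (Fin m ⊕ Fin m) (Fin m ⊕ Fin m) ℝ :=
  Matrix.fromBlocks 0 1 (-1) 0

/-- The generating family
`{ℰ(ij)} ∪ {[ℰ(ij),𝔸]} ∪ {[[ℰ(ij),𝔸],𝔸]} ∪ {[[ℰ(ij),𝔸],[ℰ(kl),𝔸]]}` (over `i ≤ j`, `k ≤ l`). -/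
noncomputable def gens {m : ℕ} (R : Matrix (Fin m) (Fin m) ℝ) :
    Set (Matrix (Fin m ⊕ Fin m) (Fin m ⊕ Fin m) ℝ) :=
  {Y | ∃ i j : Fin m, i ≤ j ∧ Y = calE i j} ∪
  {Y | ∃ i j : Fin m, i ≤ j ∧ Y = br (calE i j) (Amat R)} ∪
  {Y | ∃ i j : Fin m, i ≤ j ∧ Y = br (br (calE i j) (Amat R)) (Amat R)} ∪
  {Y | ∃ i j k l : Fin m, i ≤ j ∧ k ≤ l ∧
    Y = br (br (calE i j) (Amat R)) (br (calE k l) (Amat R))}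

open LieAlgebra.Symplectic

attribute [local instance 100] LieRing.ofAssociativeRing

theorem apply_mem_of_mem_span_range {R M N ι : Type*} [Semiring R] [AddCommMonoid M]
    [Module R M] [AddCommMonoid N] [Module R N] {f : M →ₗ[R] N} {v : ι → M} {p : Submodule R N}
    (h : ∀ i, f (v i) ∈ p) {x : M} (hx : x ∈ Submodule.span R (Set.range v)) : f x ∈ p :=
  (Submodule.span_le (p := p.comap f)).2 (Set.range_subset_iff.2 h) hx

section SymmetricMatrices

variable (n R : Type*) [CommRing R]

def symmetricMatrices : Submodule R (Matrix n n R) where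
  carrier := {A | A.IsSymm}
  add_mem' := IsSymm.add
  zero_mem' := isSymm_zero
  smul_mem' c _ h := h.smul c

def symmetricMatricesEquivSym2 : (Sym2 n → R) ≃ₗ[R] symmetricMatrices n R where
  toFun f := ⟨of fun i j => f s(i, j), by ext i j; simp [Sym2.eq_swap]⟩
  invFun A := Sym2.lift ⟨fun i j => A.1 i j, fun i j => A.2.apply j i⟩
  map_add' _ _ := rfl
  map_smul' _ _ := rfl
  left_inv f := by ext ⟨i, j⟩; rfl
  right_inv A := rfl

theorem finrank_symmetricMatrices [Fintype n] [DecidableEq n] [StrongRankCondition R] :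
    Module.finrank R (symmetricMatrices n R) = (Fintype.card n + 1).choose 2 := by
  rw [← (symmetricMatricesEquivSym2 n R).finrank_eq, Module.finrank_fintype_fun_eq_card, Sym2.card]

end SymmetricMatrices

section Symplectic

variable {l R : Type*} [DecidableEq l] [Fintype l] [CommRing R]

theorem mem_sp_iff_isSymm_J_mul {A : Matrix (l ⊕ l) (l ⊕ l) R} :
    A ∈ sp l R ↔ (J l R * A).IsSymm := by
  rw [sp, mem_skewAdjointMatricesLieSubalgebra, mem_skewAdjointMatricesSubmodule,
    Matrix.IsSkewAdjoint, Matrix.IsAdjointPair, IsSymm, transpose_mul, J_transpose, Matrix.mul_neg,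
    Matrix.mul_neg, neg_eq_iff_eq_neg]

theorem fromBlocks_mem_sp_iff {A B C D : Matrix l l R} :
    fromBlocks A B C D ∈ sp l R ↔ B.IsSymm ∧ C.IsSymm ∧ D = -Aᵀ := by
  rw [mem_sp_iff_isSymm_J_mul, J, fromBlocks_multiply, IsSymm, fromBlocks_transpose]
  simp only [Matrix.zero_mul, zero_add, Matrix.neg_mul, Matrix.one_mul, add_zero, fromBlocks_inj,
    transpose_neg, neg_inj]
  constructor
  · rintro ⟨hC, hAD, -, hB⟩
    exact ⟨hB, hC, by rw [hAD, neg_neg]⟩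
  · rintro ⟨hB, hC, rfl⟩
    simp [hB.eq, hC.eq]

end Symplectic

theorem finrank_sp {l K : Type*} [DecidableEq l] [Fintype l] [Field K] :
    Module.finrank K (sp l K : Submodule K (Matrix (l ⊕ l) (l ⊕ l) K)) =
      Fintype.card l * (2 * Fintype.card l + 1) := by
  let e : Matrix (l ⊕ l) (l ⊕ l) K ≃ₗ[K] Matrix (l ⊕ l) (l ⊕ l) K :=
    LinearEquiv.ofLinearMap (LinearMap.mulLeft K (J l K)) (LinearMap.mulLeft K (-J l K))
      (by ext1 X; simp [← Matrix.mul_assoc, J_squared])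
      (by ext1 X; simp [← Matrix.mul_assoc, J_squared])
  have hmap : (sp l K : Submodule K _).map e.toLinearMap = symmetricMatrices (l ⊕ l) K := by
    ext X
    rw [Submodule.mem_map_equiv, LieSubalgebra.mem_toSubmodule, mem_sp_iff_isSymm_J_mul]
    simp [e, symmetricMatrices, ← Matrix.mul_assoc, J_squared]
  rw [← e.finrank_map_eq, hmap, finrank_symmetricMatrices, Fintype.card_sum, Nat.choose_two_right,
    Nat.add_sub_cancel, show ∀ n : ℕ, (n + n + 1) * (n + n) = n * (2 * n + 1) * 2 by
      intro n; ring, Nat.mul_div_cancel _ two_pos]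

section Blocks

variable {l R : Type*} [CommRing R]

def blockScalarₗ (a b c d : R) : Matrix l l R →ₗ[R] Matrix (l ⊕ l) (l ⊕ l) R where
  toFun E := fromBlocks (a • E) (b • E) (c • E) (d • E)
  map_add' E F := by simp only [smul_add, fromBlocks_add]
  map_smul' r E := by simp only [smul_comm _ r, fromBlocks_smul, RingHom.id_apply]

@[simp]
theorem blockScalarₗ_apply (a b c d : R) (E : Matrix l l R) :
    blockScalarₗ a b c d E = fromBlocks (a • E) (b • E) (c • E) (d • E) := rfl

end Blocks

theorem Jm_eq_neg_J (m : ℕ) : Jm m = -J (Fin m) ℝ := by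
  simp [Jm, J, fromBlocks_neg]

theorem br_mem_sp {l : Type*} [DecidableEq l] [Fintype l] {X Y : Matrix (l ⊕ l) (l ⊕ l) ℝ}
    (hX : X ∈ sp l ℝ) (hY : Y ∈ sp l ℝ) : br X Y ∈ sp l ℝ :=
  (sp l ℝ).lie_mem hX hY

section Eij

variable {m : ℕ}

theorem Eij_comm (i j : Fin m) : Eij i j = Eij j i := by
  ext k l
  simp only [Eij, of_apply, and_comm, add_comm]

theorem Eij_eq_single (i j : Fin m) : Eij i j = single i j 1 + single j i 1 := by
  ext k l
  simp [Eij, single_apply, and_comm]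

theorem isSymm_Eij (i j : Fin m) : (Eij i j).IsSymm := by
  ext k l
  simp only [Eij, transpose_apply, of_apply]
  rw [add_comm]

theorem sum_smul_Eij (A : Matrix (Fin m) (Fin m) ℝ) : ∑ i, ∑ j, A i j • Eij i j = A + Aᵀ := by
  ext k l
  simp [Eij, Matrix.sum_apply, Finset.sum_add_distrib, ite_and, mul_add]

theorem mem_span_Eij_of_isSymm {C : Matrix (Fin m) (Fin m) ℝ} (hC : C.IsSymm) :
    C ∈ Submodule.span ℝ (Set.range fun p : Fin m × Fin m => Eij p.1 p.2) := by
  rw [Submodule.mem_span_range_iff_exists_fun]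
  refine ⟨fun p => 2⁻¹ * C p.1 p.2, ?_⟩
  simp only [Fintype.sum_prod_type, mul_smul, ← Finset.smul_sum, sum_smul_Eij, hC.eq]
  module

theorem br_Eij_Eij (i j : Fin m) :
    br (Eij i i) (Eij i j) = (2 : ℝ) • (single i j 1 - single j i 1) := by
  rcases eq_or_ne i j with rfl | hij
  · simp [br]
  · simp [br, Eij_eq_single, add_mul, mul_add, hij, hij.symm, two_smul]
    abel

theorem mem_span_br_Eij_of_transpose_eq_neg {K : Matrix (Fin m) (Fin m) ℝ} (hK : Kᵀ = -K) :
    K ∈ Submodule.span ℝ (Set.range fun p : Fin m × Fin m => br (Eij p.1 p.1) (Eij p.1 p.2)) := by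
  rw [Submodule.mem_span_range_iff_exists_fun]
  refine ⟨fun p => 4⁻¹ * K p.1 p.2, ?_⟩
  ext k l
  have hlk : K l k = -K k l := by simpa using congrFun (congrFun hK k) l
  simp [Fintype.sum_prod_type, br_Eij_Eij, Matrix.sum_apply, single_apply, mul_sub,
    Finset.sum_sub_distrib, ite_and, hlk]
  ring

end Eij

section Brackets

variable {m : ℕ} (E F R : Matrix (Fin m) (Fin m) ℝ)

theorem br_fromBlocks_Amat : br (fromBlocks 0 0 E 0) (Amat R) = fromBlocks (-E) 0 0 E := by
  simp [br, Amat, fromBlocks_multiply, sub_eq_add_neg, fromBlocks_neg, fromBlocks_add]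

theorem br_br_fromBlocks_Amat_Amat :
    br (br (fromBlocks 0 0 E 0) (Amat R)) (Amat R) =
      fromBlocks 0 ((-2 : ℝ) • E) (-(E * R + R * E)) 0 := by
  rw [br_fromBlocks_Amat]
  simp [br, Amat, fromBlocks_multiply, sub_eq_add_neg, fromBlocks_neg, fromBlocks_add]
  constructor <;> module

theorem br_br_fromBlocks_Amat_br_fromBlocks_Amat :
    br (br (fromBlocks 0 0 E 0) (Amat R)) (br (fromBlocks 0 0 F 0) (Amat R)) =
      fromBlocks (br E F) 0 0 (br E F) := by
  rw [br_fromBlocks_Amat, br_fromBlocks_Amat]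
  simp [br, fromBlocks_multiply, sub_eq_add_neg, fromBlocks_neg, fromBlocks_add]

end Brackets

section Span

variable {m : ℕ} {R : Matrix (Fin m) (Fin m) ℝ}

theorem gens_subset_sp (hR : R.IsSymm) : gens R ⊆ sp (Fin m) ℝ := by
  have hE (i j : Fin m) : calE i j ∈ sp (Fin m) ℝ :=
    fromBlocks_mem_sp_iff.2 ⟨isSymm_zero, isSymm_Eij i j, by simp⟩
  have hA : Amat R ∈ sp (Fin m) ℝ := fromBlocks_mem_sp_iff.2 ⟨isSymm_one, hR.neg, by simp⟩
  rintro Y (((⟨i, j, -, rfl⟩ | ⟨i, j, -, rfl⟩) | ⟨i, j, -, rfl⟩) | ⟨i, j, k, l, -, -, rfl⟩)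
  · exact hE i j
  · exact br_mem_sp (hE i j) hA
  · exact br_mem_sp (br_mem_sp (hE i j) hA) hA
  · exact br_mem_sp (br_mem_sp (hE i j) hA) (br_mem_sp (hE k l) hA)

theorem exists_le_calE_eq (i j : Fin m) : ∃ i' j', i' ≤ j' ∧ calE i j = calE i' j' := by
  rcases le_total i j with h | h
  · exact ⟨i, j, h, rfl⟩
  · exact ⟨j, i, h, by rw [calE, calE, Eij_comm]⟩

variable (R)

theorem calE_mem_span_gens (i j : Fin m) : calE i j ∈ Submodule.span ℝ (gens R) := by
  obtain ⟨i', j', h, e⟩ := exists_le_calE_eq i j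
  exact Submodule.subset_span (Or.inl (Or.inl (Or.inl ⟨i', j', h, e⟩)))

theorem br_calE_Amat_mem_span_gens (i j : Fin m) :
    br (calE i j) (Amat R) ∈ Submodule.span ℝ (gens R) := by
  obtain ⟨i', j', h, e⟩ := exists_le_calE_eq i j
  exact Submodule.subset_span (Or.inl (Or.inl (Or.inr ⟨i', j', h, by rw [e]⟩)))

theorem br_br_calE_Amat_Amat_mem_span_gens (i j : Fin m) :
    br (br (calE i j) (Amat R)) (Amat R) ∈ Submodule.span ℝ (gens R) := by
  obtain ⟨i', j', h, e⟩ := exists_le_calE_eq i j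
  exact Submodule.subset_span (Or.inl (Or.inr ⟨i', j', h, by rw [e]⟩))

theorem br_br_calE_Amat_br_calE_Amat_mem_span_gens (i j k l : Fin m) :
    br (br (calE i j) (Amat R)) (br (calE k l) (Amat R)) ∈ Submodule.span ℝ (gens R) := by
  obtain ⟨i', j', h, e⟩ := exists_le_calE_eq i j
  obtain ⟨k', l', h', e'⟩ := exists_le_calE_eq k l
  exact Submodule.subset_span (Or.inr ⟨i', j', k', l', h, h', by rw [e, e']⟩)

theorem fromBlocks_lower_mem_span_gens {C : Matrix (Fin m) (Fin m) ℝ} (hC : C.IsSymm) :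
    fromBlocks 0 0 C 0 ∈ Submodule.span ℝ (gens R) := by
  have hgen (p : Fin m × Fin m) :
      blockScalarₗ (0 : ℝ) 0 1 0 (Eij p.1 p.2) ∈ Submodule.span ℝ (gens R) := by
    simpa [calE] using calE_mem_span_gens R p.1 p.2
  simpa using apply_mem_of_mem_span_range hgen (mem_span_Eij_of_isSymm hC)

theorem fromBlocks_diag_neg_mem_span_gens {S : Matrix (Fin m) (Fin m) ℝ} (hS : S.IsSymm) :
    fromBlocks S 0 0 (-S) ∈ Submodule.span ℝ (gens R) := by
  have hgen (p : Fin m × Fin m) :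
      blockScalarₗ (1 : ℝ) 0 0 (-1) (Eij p.1 p.2) ∈ Submodule.span ℝ (gens R) := by
    have := neg_mem (br_calE_Amat_mem_span_gens R p.1 p.2)
    rw [calE, br_fromBlocks_Amat, fromBlocks_neg] at this
    simpa using this
  simpa using apply_mem_of_mem_span_range hgen (mem_span_Eij_of_isSymm hS)

theorem fromBlocks_diag_mem_span_gens {K : Matrix (Fin m) (Fin m) ℝ} (hK : Kᵀ = -K) :
    fromBlocks K 0 0 K ∈ Submodule.span ℝ (gens R) := by
  have hgen (p : Fin m × Fin m) : blockScalarₗ (1 : ℝ) 0 0 1 (br (Eij p.1 p.1) (Eij p.1 p.2)) ∈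
      Submodule.span ℝ (gens R) := by
    have := br_br_calE_Amat_br_calE_Amat_mem_span_gens R p.1 p.1 p.1 p.2
    rw [calE, calE, br_br_fromBlocks_Amat_br_fromBlocks_Amat] at this
    simpa using this
  simpa using apply_mem_of_mem_span_range hgen (mem_span_br_Eij_of_transpose_eq_neg hK)

theorem fromBlocks_upper_mem_span_gens (hR : R.IsSymm) {B : Matrix (Fin m) (Fin m) ℝ}
    (hB : B.IsSymm) : fromBlocks 0 B 0 0 ∈ Submodule.span ℝ (gens R) := by
  have hgen (p : Fin m × Fin m) :
      blockScalarₗ (0 : ℝ) 1 0 0 (Eij p.1 p.2) ∈ Submodule.span ℝ (gens R) := by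
    obtain ⟨i, j⟩ := p
    have hER : (Eij i j * R + R * Eij i j).IsSymm := by
      simp [IsSymm, transpose_mul, hR.eq, (isSymm_Eij i j).eq, add_comm]
    have h := add_mem (br_br_calE_Amat_Amat_mem_span_gens R i j)
      (fromBlocks_lower_mem_span_gens R hER)
    rw [calE, br_br_fromBlocks_Amat_Amat, fromBlocks_add] at h
    convert Submodule.smul_mem _ (-2⁻¹ : ℝ) h using 1
    simp [fromBlocks_smul, smul_smul, fromBlocks_neg]
  simpa using apply_mem_of_mem_span_range hgen (mem_span_Eij_of_isSymm hB)

theorem sp_le_span_gens (hR : R.IsSymm) :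
    (sp (Fin m) ℝ : Submodule ℝ _) ≤ Submodule.span ℝ (gens R) := by
  intro Y hY
  rw [← fromBlocks_toBlocks Y] at hY ⊢
  obtain ⟨hB, hC, hD⟩ := fromBlocks_mem_sp_iff.1 hY
  set A := Y.toBlocks₁₁
  set S := (2⁻¹ : ℝ) • (A + Aᵀ)
  set K := (2⁻¹ : ℝ) • (A - Aᵀ)
  have hS : S.IsSymm := by simp [S, IsSymm, add_comm]
  have hK : Kᵀ = -K := by simp [K, ← smul_neg]
  have hdecomp : fromBlocks A Y.toBlocks₁₂ Y.toBlocks₂₁ Y.toBlocks₂₂ =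
      fromBlocks 0 0 Y.toBlocks₂₁ 0 + fromBlocks 0 Y.toBlocks₁₂ 0 0 + fromBlocks S 0 0 (-S) +
        fromBlocks K 0 0 K := by
    simp only [fromBlocks_add, hD, S, K]
    congr 1 <;> module
  rw [hdecomp]
  exact add_mem (add_mem (add_mem (fromBlocks_lower_mem_span_gens R hC)
    (fromBlocks_upper_mem_span_gens R hR hB)) (fromBlocks_diag_neg_mem_span_gens R hS))
    (fromBlocks_diag_mem_span_gens R hK)

end Span

theorem span_tangent_space_general {m : ℕ}
    (R : Matrix (Fin m) (Fin m) ℝ) (hR : R.IsSymm) :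
    ((Submodule.span ℝ (gens R) :
        Set (Matrix (Fin m ⊕ Fin m) (Fin m ⊕ Fin m) ℝ)) =
      {Y | (Jm m * Y).IsSymm}) ∧
    Module.finrank ℝ (Submodule.span ℝ (gens R)) = m * (2 * m + 1) := by
  have hspan : Submodule.span ℝ (gens R) = sp (Fin m) ℝ :=
    le_antisymm (Submodule.span_le.2 (gens_subset_sp hR)) (sp_le_span_gens R hR)
  refine ⟨?_, by rw [hspan, finrank_sp, Fintype.card_fin]⟩
  ext Y
  simp [hspan, mem_sp_iff_isSymm_J_mul, Jm_eq_neg_J, isSymm_neg_iff]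

/-- **Spanning property** : the matrices `ℰ(ij)`, `[ℰ(ij),𝔸]`, `[[ℰ(ij),𝔸],𝔸]` and
`[[ℰ(ij),𝔸],[ℰ(kl),𝔸]]` span the tangent space at the identity of `Sp(m)`,
`{Y : 𝕁Y symmetric}`, whose dimension is `m(2m+1)`. -/
theorem span_tangent_space {m : ℕ} (hm : 1 ≤ m)
    (R : Matrix (Fin m) (Fin m) ℝ) (hR : R.IsSymm) :
    ((Submodule.span ℝ (gens R) :
        Set (Matrix (Fin m ⊕ Fin m) (Fin m ⊕ Fin m) ℝ)) =
      {Y | (Jm m * Y).IsSymm}) ∧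
    Module.finrank ℝ (Submodule.span ℝ (gens R)) = m * (2 * m + 1) :=
  span_tangent_space_general R hR

end Stmt16
end

section
/- Let m ≥ 1, let R be a symmetric m×m real matrix and set 𝔸 := [[0, I_m], [−R, 0]] ∈ M_{2m}(ℝ). For 1 ≤ i ≤ j ≤ m let E(ij) be the symmetric m×m matrix with entries (E(ij))_{kl} = δ_{ik}δ_{jl} + δ_{il}δ_{jk} and ℰ(ij) := [[0, 0], [E(ij), 0]]. Then for every i ≤ j: (1) [[ℰ(ij), 𝔸], ℰ(ij)] = 2·[[0, 0], [(E(ij))², 0]], and this matrix belongs to Span{ ℰ(rs) : 1 ≤ r ≤ s ≤ m }; (2) [[[ℰ(ij), 𝔸], 𝔸], ℰ(ij)] = 2·[[−(E(ij))², 0], [0, (E(ij))²]], and this matrix belongs to Span{ [ℰ(rs), 𝔸] : 1 ≤ r ≤ s ≤ m }. -/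
/-!
Write `ℰ_X := [[0, 0], [X, 0]]`. For every `X` block multiplication gives
`[ℰ_X, 𝔸] = [[-X, 0], [0, X]]`, `[[ℰ_X, 𝔸], ℰ_X] = 2 ℰ_{X²}` and `[[[ℰ_X, 𝔸], 𝔸], ℰ_X] = 2 [[-X², 0], [0, X²]]`.
Both right-hand sides depend linearly on `X²`, and `E(ij)²` is a combination of `E(ii)` and `E(jj)`:
it is `2 E(ii)` if `i = j` and `(E(ii) + E(jj)) / 2` otherwise.
-/

open Matrix

namespace Stmt17

/-- The symmetric matrix `E(ij)` with entries `(E(ij))_{kl} = δ_{ik}δ_{jl} + δ_{il}δ_{jk}`. -/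
def Eij {m : ℕ} (i j : Fin m) : Matrix (Fin m) (Fin m) ℝ :=
  Matrix.of fun k l =>
    ((if i = k ∧ j = l then 1 else 0) : ℝ) + (if i = l ∧ j = k then 1 else 0)

/-- `ℰ(ij) = [[0,0],[E(ij),0]]`. -/
def calE {m : ℕ} (i j : Fin m) : Matrix (Fin m ⊕ Fin m) (Fin m ⊕ Fin m) ℝ :=
  Matrix.fromBlocks 0 0 (Eij i j) 0

/-- `𝔸 = [[0, I_m],[−R, 0]]`. -/
noncomputable def Amat {m : ℕ} (R : Matrix (Fin m) (Fin m) ℝ) :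
    Matrix (Fin m ⊕ Fin m) (Fin m ⊕ Fin m) ℝ :=
  Matrix.fromBlocks 0 1 (-R) 0

/-- The matrix bracket `[B, B'] = BB' − B'B`. -/
def br {N : Type*} [Fintype N] (X Y : Matrix N N ℝ) : Matrix N N ℝ := X * Y - Y * X

variable {m : ℕ}

section BlockMaps

variable {n α : Type*} [Ring α]

def lowerBlockₗ : Matrix n n α →ₗ[α] Matrix (n ⊕ n) (n ⊕ n) α where
  toFun X := fromBlocks 0 0 X 0
  map_add' X Y := by simp [fromBlocks_add]
  map_smul' c X := by simp [fromBlocks_smul]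

def negBlockDiagₗ : Matrix n n α →ₗ[α] Matrix (n ⊕ n) (n ⊕ n) α where
  toFun X := fromBlocks (-X) 0 0 X
  map_add' X Y := by rw [fromBlocks_add, neg_add, add_zero]
  map_smul' c X := by simp [fromBlocks_smul]

end BlockMaps

section Brackets

variable (R X : Matrix (Fin m) (Fin m) ℝ)

theorem br_lowerBlock_Amat : br (fromBlocks 0 0 X 0) (Amat R) = fromBlocks (-X) 0 0 X := by
  simp [br, Amat, fromBlocks_multiply, sub_eq_add_neg, fromBlocks_neg, fromBlocks_add]

theorem br_br_lowerBlock_Amat :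
    br (br (fromBlocks 0 0 X 0) (Amat R)) (fromBlocks 0 0 X 0) = 2 • fromBlocks 0 0 (X * X) 0 := by
  rw [br_lowerBlock_Amat, two_nsmul, fromBlocks_add]
  simp [br, fromBlocks_multiply, sub_eq_add_neg, fromBlocks_neg, fromBlocks_add]

theorem br_br_br_lowerBlock_Amat :
    br (br (br (fromBlocks 0 0 X 0) (Amat R)) (Amat R)) (fromBlocks 0 0 X 0) =
      2 • fromBlocks (-(X * X)) 0 0 (X * X) := by
  rw [br_lowerBlock_Amat, two_nsmul, fromBlocks_add]
  simp [br, Amat, fromBlocks_multiply, sub_eq_add_neg, fromBlocks_neg, fromBlocks_add, add_mul,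
    mul_add]

end Brackets

theorem Eij_eq_single_add_single (i j : Fin m) : Eij i j = single i j 1 + single j i 1 := by
  ext k l
  simp [Eij, single, and_comm]

theorem Eij_self_mul_self (i : Fin m) : Eij i i * Eij i i = (2 : ℝ) • Eij i i := by
  simp only [Eij_eq_single_add_single, add_mul, mul_add, single_mul_single_same, mul_one]
  module

theorem Eij_mul_self_of_ne {i j : Fin m} (hij : i ≠ j) :
    Eij i j * Eij i j = (1 / 2 : ℝ) • Eij i i + (1 / 2 : ℝ) • Eij j j := by
  simp only [Eij_eq_single_add_single, add_mul, mul_add, single_mul_single_same, mul_one,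
    single_mul_single_of_ne (c := (1 : ℝ)) (d := 1) i j i hij.symm,
    single_mul_single_of_ne (c := (1 : ℝ)) (d := 1) j i j hij]
  module

theorem Eij_mul_self_mem_span (i j : Fin m) :
    Eij i j * Eij i j ∈ Submodule.span ℝ {Eij i i, Eij j j} := by
  rw [Submodule.mem_span_pair]
  rcases eq_or_ne i j with rfl | hij
  · exact ⟨1, 1, by rw [Eij_self_mul_self]; module⟩
  · exact ⟨1 / 2, 1 / 2, (Eij_mul_self_of_ne hij).symm⟩

theorem map_Eij_mul_self_mem_span {M : Type*} [AddCommGroup M] [Module ℝ M]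
    (f : Matrix (Fin m) (Fin m) ℝ →ₗ[ℝ] M) {S : Set M} (hS : ∀ k, f (Eij k k) ∈ S) (i j : Fin m) :
    f (Eij i j * Eij i j) ∈ Submodule.span ℝ S := by
  refine Submodule.span_mono ?_
    (Submodule.apply_mem_span_image_of_mem_span f (Eij_mul_self_mem_span i j))
  rw [Set.image_pair]
  exact Set.insert_subset (hS i) (Set.singleton_subset_iff.mpr (hS j))

theorem second_order_bracket_conditions_general {m : ℕ}
    (R : Matrix (Fin m) (Fin m) ℝ) :
    ∀ i j : Fin m, i ≤ j →
      (br (br (calE i j) (Amat R)) (calE i j) =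
          2 • Matrix.fromBlocks 0 0 (Eij i j * Eij i j) 0 ∧
        br (br (calE i j) (Amat R)) (calE i j) ∈
          Submodule.span ℝ {Y | ∃ r s : Fin m, r ≤ s ∧ Y = calE r s}) ∧
      (br (br (br (calE i j) (Amat R)) (Amat R)) (calE i j) =
          2 • Matrix.fromBlocks (-(Eij i j * Eij i j)) 0 0 (Eij i j * Eij i j) ∧
        br (br (br (calE i j) (Amat R)) (Amat R)) (calE i j) ∈
          Submodule.span ℝ {Y | ∃ r s : Fin m, r ≤ s ∧ Y = br (calE r s) (Amat R)}) := by
  intro i j _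
  have second : br (br (calE i j) (Amat R)) (calE i j) = _ := br_br_lowerBlock_Amat R (Eij i j)
  have third : br (br (br (calE i j) (Amat R)) (Amat R)) (calE i j) = _ :=
    br_br_br_lowerBlock_Amat R (Eij i j)
  refine ⟨⟨second, ?_⟩, third, ?_⟩
  · rw [second]
    refine nsmul_mem (map_Eij_mul_self_mem_span lowerBlockₗ ?_ i j) 2
    exact fun k => ⟨k, k, le_rfl, rfl⟩
  · rw [third]
    refine nsmul_mem (map_Eij_mul_self_mem_span negBlockDiagₗ ?_ i j) 2
    exact fun k => ⟨k, k, le_rfl, (br_lowerBlock_Amat R (Eij k k)).symm⟩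

/-- The bracket conditions at second order for the geodesic control system:
`[[ℰ(ij),𝔸], ℰ(ij)] = 2[[0,0],[E(ij)²,0]] ∈ Span{ℰ(rs)}` and
`[[[ℰ(ij),𝔸],𝔸], ℰ(ij)] = 2[[−E(ij)²,0],[0,E(ij)²]] ∈ Span{[ℰ(rs),𝔸]}`. -/
theorem second_order_bracket_conditions {m : ℕ} (hm : 1 ≤ m)
    (R : Matrix (Fin m) (Fin m) ℝ) (hR : R.IsSymm) :
    ∀ i j : Fin m, i ≤ j →
      (br (br (calE i j) (Amat R)) (calE i j) =
          2 • Matrix.fromBlocks 0 0 (Eij i j * Eij i j) 0 ∧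
        br (br (calE i j) (Amat R)) (calE i j) ∈
          Submodule.span ℝ {Y | ∃ r s : Fin m, r ≤ s ∧ Y = calE r s}) ∧
      (br (br (br (calE i j) (Amat R)) (Amat R)) (calE i j) =
          2 • Matrix.fromBlocks (-(Eij i j * Eij i j)) 0 0 (Eij i j * Eij i j) ∧
        br (br (br (calE i j) (Amat R)) (Amat R)) (calE i j) ∈
          Submodule.span ℝ {Y | ∃ r s : Fin m, r ≤ s ∧ Y = br (calE r s) (Amat R)}) :=
  second_order_bracket_conditions_general R

end Stmt17
end
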